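/- arXiv:2605.05284 — 2 statements merged into one kernel-verified Lean document; each statement's English description precedes it below -/
import Mathlib

section
/- If P_g is Gaussian with mean m (as a function of m) and F is a fixed positive integrable fitness function, then the selection gradient f_g defined as the regression coefficient V_g^{-1}cov_g(φ, F/⟨F⟩_g) equals the gradient with respect to the mean of the log of the mean fitness: f_g = ∇_m log⟨F⟩_g where ⟨F⟩_g(m) = ∫F(φ)N(φ; m, V_g)dφ. -/
/-!
Differentiating `⟨F⟩` under the integral sign along `v` gives `∫ F N(m, V) ((V⁻¹ (φ - m)) ⬝ v)`,
which by linearity of the integral is `⟨F⟩ · (V⁻¹ cov) ⬝ v`; dividing by `⟨F⟩` gives the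
derivative of `log ⟨F⟩`. Linearity needs the first moments `F N(m, V) (φⱼ - mⱼ)` to be
integrable. Shifting the mean of a Gaussian by `± V w` multiplies its density by
`exp (± (φ - m) ⬝ w)` up to a constant, so `|L| ≤ eᴸ + e⁻ᴸ` with `L = (φ - m) ⬝ w` bounds
`|F N(m, V) L|` by `|F|` against the Gaussians with means `m ± V w`, which are integrable.
-/

open MeasureTheory Matrix Real

/-- The multivariate Gaussian density on `ℝ^N` with mean `m` and covariance `S`. -/
noncomputable def gaussPDF {n : ℕ} (m : Fin n → ℝ) (S : Matrix (Fin n) (Fin n) ℝ)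
    (x : Fin n → ℝ) : ℝ :=
  (Real.sqrt ((2 * Real.pi) ^ n * S.det))⁻¹ *
    Real.exp (-(1 / 2) * ((x - m) ⬝ᵥ (S⁻¹ *ᵥ (x - m))))

theorem Real.abs_le_exp_add_exp_neg (x : ℝ) : |x| ≤ exp x + exp (-x) := by
  linarith [add_one_le_exp |x|, exp_abs_le x]

theorem MeasureTheory.Integrable.mul_of_mul_exp_of_mul_exp_neg {α : Type*} [MeasurableSpace α]
    {μ : Measure α} {f L : α → ℝ} (hf : AEStronglyMeasurable f μ)
    (hL : AEStronglyMeasurable L μ) (hexp : Integrable (fun x => f x * exp (L x)) μ)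
    (hexp_neg : Integrable (fun x => f x * exp (-L x)) μ) :
    Integrable (fun x => f x * L x) μ := by
  refine (hexp.norm.add hexp_neg.norm).mono' (hf.mul hL) (ae_of_all _ fun x => ?_)
  simp only [Pi.add_apply, norm_mul, norm_eq_abs, abs_exp, ← mul_add]
  exact mul_le_mul_of_nonneg_left (abs_le_exp_add_exp_neg _) (abs_nonneg _)

theorem Matrix.IsSymm.dotProduct_mulVec_comm {ι R : Type*} [Fintype ι] [CommSemiring R]
    {A : Matrix ι ι R} (hA : A.IsSymm) (u v : ι → R) :
    u ⬝ᵥ (A *ᵥ v) = v ⬝ᵥ (A *ᵥ u) := by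
  rw [dotProduct_mulVec, ← hA.eq, vecMul_transpose, dotProduct_comm, hA.eq]

theorem integral_mul_mulVec_dotProduct {α ι κ : Type*} [MeasurableSpace α] [Fintype ι]
    [Fintype κ] {μ : Measure α} {φ : α → ℝ} {y : α → ι → ℝ}
    (hy : ∀ j, Integrable (fun x => φ x * y x j) μ) (A : Matrix κ ι ℝ) (v : κ → ℝ) :
    ∫ x, φ x * ((A *ᵥ y x) ⬝ᵥ v) ∂μ = (A *ᵥ fun j => ∫ x, φ x * y x j ∂μ) ⬝ᵥ v := by
  have hlinear (z : ι → ℝ) : (A *ᵥ z) ⬝ᵥ v = ∑ j, z j * (v ᵥ* A) j := by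
    rw [dotProduct_comm, dotProduct_mulVec, dotProduct_comm, dotProduct]
  simp only [hlinear, Finset.mul_sum, ← mul_assoc]
  rw [integral_finsetSum _ fun j _ => (hy j).mul_const _]
  simp only [integral_mul_const]

section Gaussian

variable {n : ℕ} {S : Matrix (Fin n) (Fin n) ℝ}

theorem gaussPDF_add_mean (hS : S.IsSymm) (m u x : Fin n → ℝ) :
    gaussPDF (m + u) S x =
      gaussPDF m S x * exp ((x - m) ⬝ᵥ (S⁻¹ *ᵥ u) - u ⬝ᵥ (S⁻¹ *ᵥ u) / 2) := by
  unfold gaussPDF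
  rw [mul_assoc, ← exp_add, sub_add_eq_sub_sub]
  congr 2
  rw [mulVec_sub, sub_dotProduct, dotProduct_sub, dotProduct_sub,
    hS.inv.dotProduct_mulVec_comm u (x - m)]
  ring

theorem integrable_mul_gaussPDF_mul_dotProduct (hS : S.IsSymm) (hdet : IsUnit S.det)
    {f : (Fin n → ℝ) → ℝ} (hf : ∀ m', Integrable fun x => f x * gaussPDF m' S x)
    (m w : Fin n → ℝ) :
    Integrable fun x => f x * gaussPDF m S x * ((x - m) ⬝ᵥ w) := by
  set u := S *ᵥ w
  have hu : S⁻¹ *ᵥ u = w := by rw [mulVec_mulVec, nonsing_inv_mul _ hdet, one_mulVec]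
  have hL : Continuous fun x : Fin n → ℝ => (x - m) ⬝ᵥ w := by fun_prop
  refine Integrable.mul_of_mul_exp_of_mul_exp_neg (hf m).aestronglyMeasurable
    hL.aestronglyMeasurable ?_ ?_
  · refine ((hf (m + u)).const_mul (exp (u ⬝ᵥ w / 2))).congr (ae_of_all _ fun x => ?_)
    dsimp only
    rw [gaussPDF_add_mean hS, hu, exp_sub]
    field_simp
  · refine ((hf (m + -u)).const_mul (exp (u ⬝ᵥ w / 2))).congr (ae_of_all _ fun x => ?_)
    dsimp only
    rw [gaussPDF_add_mean hS]
    simp only [mulVec_neg, hu, neg_dotProduct, dotProduct_neg, neg_neg, exp_sub]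
    field_simp

end Gaussian

theorem lande_gradient_general
    {n : ℕ} (m : Fin n → ℝ) (V : Matrix (Fin n) (Fin n) ℝ) (hV : V.PosDef)
    (F : (Fin n → ℝ) → ℝ)
    (meanFit : (Fin n → ℝ) → ℝ)
    (hfin : ∀ m', Integrable fun x => F x * gaussPDF m' V x)
    (hpos : 0 < meanFit m)
    (cov : Fin n → ℝ)
    (hcov : ∀ i, cov i = ∫ x, (x i - m i) * (F x / meanFit m) * gaussPDF m V x)
    (hderiv : ∀ v : Fin n → ℝ,
      HasDerivAt (fun t : ℝ => meanFit (m + t • v))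
        (∫ x, F x * gaussPDF m V x * ((V⁻¹ *ᵥ (x - m)) ⬝ᵥ v)) 0) :
    ∀ v : Fin n → ℝ,
      HasDerivAt (fun t : ℝ => Real.log (meanFit (m + t • v)))
        ((V⁻¹ *ᵥ cov) ⬝ᵥ v) 0 := by
  intro v
  have hsymm : V.IsSymm := isHermitian_iff_isSymm.mp hV.isHermitian
  have hmoment : (fun j => ∫ x, F x * gaussPDF m V x * (x - m) j) = meanFit m • cov := by
    ext j
    rw [Pi.smul_apply, smul_eq_mul, hcov j, ← integral_const_mul]
    congr 1 with x
    field_simp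
    simp only [Pi.sub_apply]
  have hgrad : ∫ x, F x * gaussPDF m V x * ((V⁻¹ *ᵥ (x - m)) ⬝ᵥ v)
      = meanFit m * (V⁻¹ *ᵥ cov) ⬝ᵥ v := by
    rw [integral_mul_mulVec_dotProduct (fun j => ?_), hmoment, mulVec_smul, smul_dotProduct,
      smul_eq_mul]
    simpa only [dotProduct_single_one] using
      integrable_mul_gaussPDF_mul_dotProduct hsymm hV.det_pos.ne'.isUnit hfin m (Pi.single j 1)
  have hlog := (hderiv v).log (by simpa using hpos.ne')
  rw [hgrad] at hlog
  convert hlog using 1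
  simp only [zero_smul, add_zero]
  field_simp

/-- Lande's gradient form of the Price equation: For a Gaussian
population `N(m, V)` and a fixed positive fitness `F`, the selection gradient
`f_g = V⁻¹ cov(φ, F/⟨F⟩)` equals the gradient with respect to the mean of the
log mean fitness `log⟨F⟩(m)`, where `⟨F⟩(m) = ∫ F(φ) N(φ; m, V) dφ`.
Differentiability under the integral sign (in every direction `v`) is taken as
a hypothesis. -/
theorem lande_gradient
    {n : ℕ} (m : Fin n → ℝ) (V : Matrix (Fin n) (Fin n) ℝ) (hV : V.PosDef)
    (F : (Fin n → ℝ) → ℝ) (hFpos : ∀ x, 0 < F x)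
    (meanFit : (Fin n → ℝ) → ℝ)
    (hmeanFit : ∀ m', meanFit m' = ∫ x, F x * gaussPDF m' V x)
    (hfin : ∀ m', Integrable fun x => F x * gaussPDF m' V x)
    (hpos : 0 < meanFit m)
    (cov : Fin n → ℝ)
    (hcov : ∀ i, cov i = ∫ x, (x i - m i) * (F x / meanFit m) * gaussPDF m V x)
    (hderiv : ∀ v : Fin n → ℝ,
      HasDerivAt (fun t : ℝ => meanFit (m + t • v))
        (∫ x, F x * gaussPDF m V x * ((V⁻¹ *ᵥ (x - m)) ⬝ᵥ v)) 0) :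
    ∀ v : Fin n → ℝ,
      HasDerivAt (fun t : ℝ => Real.log (meanFit (m + t • v)))
        ((V⁻¹ *ᵥ cov) ⬝ᵥ v) 0 :=
  lande_gradient_general m V hV F meanFit hfin hpos cov hcov hderiv
end

section
/- For vectors p, q ∈ ℝ^N, the symmetric matrix ppᵀ − qqᵀ can be written as ½(uvᵀ + vuᵀ) with u = p + q and v = p − q, and its nonzero eigenvalues are exactly ½(uᵀv ± ‖u‖‖v‖); in particular its minimum eigenvalue is min(0, ½(‖p‖² − ‖q‖² − ‖p+q‖‖p−q‖)). -/
/-!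
Write `M = ½(u vᵀ + v uᵀ)` as `A * B` with `A = [u v]` of size `N × 2` and `B = ½[v; u]` of size
`2 × N`. Sylvester's identity `X² χ(AB) = X^N χ(BA)` makes the nonzero eigenvalues of `M` the
nonzero roots of the characteristic polynomial of the `2 × 2` matrix `BA`, whose trace is `uᵀv` and
whose determinant is `((uᵀv)² − ‖u‖²‖v‖²)/4`. For `N ≥ 2` one even has `χ(AB) = X^(N-2) χ(BA)`, so
both roots are eigenvalues; by Cauchy–Schwarz the smaller one is `≤ 0`, hence it is the minimum.
-/

open Matrix Polynomial

namespace Matrix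

variable {K : Type*} [Field K] {m n : Type*} [Fintype m] [Fintype n] [DecidableEq m]
  [DecidableEq n]

theorem hasEigenvalue_toLin'_iff_isRoot_charpoly (A : Matrix n n K) (μ : K) :
    Module.End.HasEigenvalue (toLin' A) μ ↔ A.charpoly.IsRoot μ := by
  rw [Module.End.hasEigenvalue_iff_isRoot_charpoly, charpoly_toLin']

theorem isRoot_charpoly_mul_comm_iff (A : Matrix m n K) (B : Matrix n m K) {μ : K}
    (hμ : μ ≠ 0) : (A * B).charpoly.IsRoot μ ↔ (B * A).charpoly.IsRoot μ := by
  have h := congrArg (eval μ) (charpoly_mul_comm' A B)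
  simp only [eval_mul, eval_pow, eval_X] at h
  simp only [IsRoot.def]
  constructor <;> intro hr
  · simpa [hr, hμ] using h.symm
  · simpa [hr, hμ] using h

theorem isRoot_charpoly_mul_of_isRoot_charpoly_mul_comm (A : Matrix m n K) (B : Matrix n m K)
    (hle : Fintype.card n ≤ Fintype.card m) {μ : K} (hμ : (B * A).charpoly.IsRoot μ) :
    (A * B).charpoly.IsRoot μ := by
  rw [charpoly_mul_comm_of_le A B hle]
  simp [IsRoot.def, hμ.eq_zero]

theorem dotProduct_le_sqrt_mul_sqrt {ι : Type*} [Fintype ι] (u v : ι → ℝ) :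
    u ⬝ᵥ v ≤ √(u ⬝ᵥ u) * √(v ⬝ᵥ v) := by
  simpa only [dotProduct, sq] using Real.sum_mul_le_sqrt_mul_sqrt Finset.univ u v

theorem vecMulVec_self_sub_vecMulVec_self {ι : Type*} (p q : ι → ℝ) :
    vecMulVec p p - vecMulVec q q =
      (1 / 2 : ℝ) • (vecMulVec (p + q) (p - q) + vecMulVec (p - q) (p + q)) := by
  ext i j
  simp only [sub_apply, Matrix.smul_apply, Matrix.add_apply, vecMulVec_apply, Pi.add_apply,
    Pi.sub_apply, smul_eq_mul]
  ring

end Matrix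

section SymmRankTwo

variable {ι : Type*} (u v : ι → ℝ)

theorem half_vecMulVec_add_vecMulVec_eq_mul :
    (1 / 2 : ℝ) • (vecMulVec u v + vecMulVec v u) =
      (of ![u, v])ᵀ * ((1 / 2 : ℝ) • of ![v, u]) := by
  ext i j
  simp only [mul_apply, Fin.sum_univ_two, transpose_apply, of_apply, Matrix.smul_apply,
    Matrix.add_apply, vecMulVec_apply, smul_eq_mul, cons_val_zero, cons_val_one]
  ring

variable [Fintype ι]

theorem half_of_mul_of_transpose_eq :
    (1 / 2 : ℝ) • of ![v, u] * (of ![u, v])ᵀ =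
      !![v ⬝ᵥ u / 2, v ⬝ᵥ v / 2; u ⬝ᵥ u / 2, u ⬝ᵥ v / 2] := by
  ext i j
  fin_cases i <;> fin_cases j <;> simp [vecMul_transpose, dotProduct_comm, div_eq_inv_mul]

theorem charpoly_half_of_mul_of_transpose :
    ((1 / 2 : ℝ) • of ![v, u] * (of ![u, v])ᵀ).charpoly =
      (X - C ((u ⬝ᵥ v + √(u ⬝ᵥ u) * √(v ⬝ᵥ v)) / 2)) *
        (X - C ((u ⬝ᵥ v - √(u ⬝ᵥ u) * √(v ⬝ᵥ v)) / 2)) := by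
  have hs : (√(u ⬝ᵥ u) * √(v ⬝ᵥ v)) ^ 2 = (u ⬝ᵥ u) * (v ⬝ᵥ v) := by
    rw [mul_pow, Real.sq_sqrt (by simpa using dotProduct_self_star_nonneg u),
      Real.sq_sqrt (by simpa using dotProduct_self_star_nonneg v)]
  rw [half_of_mul_of_transpose_eq, charpoly_fin_two, trace_fin_two_of, det_fin_two_of,
    dotProduct_comm v u]
  set s := √(u ⬝ᵥ u) * √(v ⬝ᵥ v)
  have htr : u ⬝ᵥ v / 2 + u ⬝ᵥ v / 2 = (u ⬝ᵥ v + s) / 2 + (u ⬝ᵥ v - s) / 2 := by ring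
  have hdet : u ⬝ᵥ v / 2 * (u ⬝ᵥ v / 2) - v ⬝ᵥ v / 2 * (u ⬝ᵥ u / 2) =
      (u ⬝ᵥ v + s) / 2 * ((u ⬝ᵥ v - s) / 2) := by
    linear_combination hs / 4
  rw [htr, hdet, C_add, C_mul]
  ring

theorem isRoot_charpoly_half_of_mul_of_transpose_iff (μ : ℝ) :
    ((1 / 2 : ℝ) • of ![v, u] * (of ![u, v])ᵀ).charpoly.IsRoot μ ↔
      μ = (u ⬝ᵥ v + √(u ⬝ᵥ u) * √(v ⬝ᵥ v)) / 2 ∨ μ = (u ⬝ᵥ v - √(u ⬝ᵥ u) * √(v ⬝ᵥ v)) / 2 := by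
  rw [charpoly_half_of_mul_of_transpose, root_mul, root_X_sub_C, root_X_sub_C, eq_comm,
    @eq_comm _ _ μ]

variable [DecidableEq ι] {u v}

theorem hasEigenvalue_half_vecMulVec_add_iff {μ : ℝ} (hμ : μ ≠ 0) :
    Module.End.HasEigenvalue (toLin' ((1 / 2 : ℝ) • (vecMulVec u v + vecMulVec v u))) μ ↔
      μ = (u ⬝ᵥ v + √(u ⬝ᵥ u) * √(v ⬝ᵥ v)) / 2 ∨ μ = (u ⬝ᵥ v - √(u ⬝ᵥ u) * √(v ⬝ᵥ v)) / 2 := by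
  rw [hasEigenvalue_toLin'_iff_isRoot_charpoly, half_vecMulVec_add_vecMulVec_eq_mul,
    isRoot_charpoly_mul_comm_iff _ _ hμ, isRoot_charpoly_half_of_mul_of_transpose_iff]

theorem hasEigenvalue_half_vecMulVec_add_of_two_le_card (hι : 2 ≤ Fintype.card ι) {μ : ℝ}
    (hμ : μ = (u ⬝ᵥ v + √(u ⬝ᵥ u) * √(v ⬝ᵥ v)) / 2 ∨ μ = (u ⬝ᵥ v - √(u ⬝ᵥ u) * √(v ⬝ᵥ v)) / 2) :
    Module.End.HasEigenvalue (toLin' ((1 / 2 : ℝ) • (vecMulVec u v + vecMulVec v u))) μ := by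
  rw [hasEigenvalue_toLin'_iff_isRoot_charpoly, half_vecMulVec_add_vecMulVec_eq_mul]
  exact isRoot_charpoly_mul_of_isRoot_charpoly_mul_comm _ _ (by simpa using hι)
    ((isRoot_charpoly_half_of_mul_of_transpose_iff u v μ).mpr hμ)

theorem le_of_hasEigenvalue_half_vecMulVec_add {μ : ℝ}
    (hμ : Module.End.HasEigenvalue (toLin' ((1 / 2 : ℝ) • (vecMulVec u v + vecMulVec v u))) μ) :
    (u ⬝ᵥ v - √(u ⬝ᵥ u) * √(v ⬝ᵥ v)) / 2 ≤ μ := by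
  have hs : 0 ≤ √(u ⬝ᵥ u) * √(v ⬝ᵥ v) := by positivity
  by_cases h0 : μ = 0
  · linarith [dotProduct_le_sqrt_mul_sqrt u v]
  · rcases (hasEigenvalue_half_vecMulVec_add_iff h0).mp hμ with rfl | rfl <;> linarith

end SymmRankTwo

/-- For `p, q ∈ ℝ^N`, the symmetric matrix `p pᵀ − q qᵀ` equals
`½(u vᵀ + v uᵀ)` with `u = p + q`, `v = p − q`; its nonzero eigenvalues are
exactly `½(uᵀv ± ‖u‖‖v‖)`; and (for `N ≥ 2`) its minimum eigenvalue is
`min(0, ½(‖p‖² − ‖q‖² − ‖p+q‖‖p−q‖))`. -/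
theorem rank_two_eigenvalues
    {n : ℕ} (p q u v : Fin n → ℝ)
    (hu : u = p + q) (hv : v = p - q)
    (M : Matrix (Fin n) (Fin n) ℝ)
    (hM : M = Matrix.vecMulVec p p - Matrix.vecMulVec q q)
    (lamP lamM : ℝ)
    (hlamP : lamP = (u ⬝ᵥ v + Real.sqrt (u ⬝ᵥ u) * Real.sqrt (v ⬝ᵥ v)) / 2)
    (hlamM : lamM = (u ⬝ᵥ v - Real.sqrt (u ⬝ᵥ u) * Real.sqrt (v ⬝ᵥ v)) / 2) :
    (M = (1 / 2 : ℝ) • (Matrix.vecMulVec u v + Matrix.vecMulVec v u)) ∧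
      (∀ lam : ℝ, lam ≠ 0 →
        (Module.End.HasEigenvalue (Matrix.toLin' M) lam ↔ lam = lamP ∨ lam = lamM)) ∧
      (2 ≤ n →
        IsLeast {lam : ℝ | Module.End.HasEigenvalue (Matrix.toLin' M) lam}
          (min 0 lamM)) := by
  have hMuv : M = (1 / 2 : ℝ) • (vecMulVec u v + vecMulVec v u) := by
    rw [hM, hu, hv, vecMulVec_self_sub_vecMulVec_self]
  subst hMuv hlamP hlamM
  refine ⟨rfl, fun lam hlam => hasEigenvalue_half_vecMulVec_add_iff hlam, fun hn => ?_⟩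
  rw [min_eq_right (by linarith [dotProduct_le_sqrt_mul_sqrt u v])]
  exact ⟨hasEigenvalue_half_vecMulVec_add_of_two_le_card (by simpa using hn) (Or.inr rfl),
    fun _ => le_of_hasEigenvalue_half_vecMulVec_add⟩
end
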